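/- For every natural number n, the value \mathcal{T}_n(-n-1) equals the n-th subfactorial (derangement number): \mathcal{T}_n(-n-1) = \sum_{k=0}^{n} (-1)^k \frac{n!}{k!}. -/

import Mathlib

/-!
At `z = -n - 1` the base `n - m + z` equals `-(m + 1)`. Expanding `(m + 1)^(n - m)` by the
binomial theorem and using `C(n,m) C(n-m,k) = C(n,k) C(n-k,m)`, the double sum regroups as
`∑ₖ (-1)^k C(n,k) ∑ₘ (-1)^(n-k-m) C(n-k,m) m^(n-k)`. The inner sum is the `(n-k)`-th forward
difference of `x ↦ x^(n-k)`, i.e. `(n-k)!`, and `C(n,k) (n-k)! = n!/k!`.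
-/

open Finset

/-- The polynomial `𝒯 n z = ∑_{m=0}^{n} C(n,m) m^m (n-m+z)^(n-m)` (with `0^0 = 1`). -/
noncomputable def calT (n : ℕ) (z : ℂ) : ℂ :=
  ∑ m ∈ Finset.range (n + 1),
    (n.choose m : ℂ) * (m : ℂ) ^ m * (((n - m : ℕ) : ℂ) + z) ^ (n - m)

open Nat

theorem Nat.choose_mul_choose_sub_comm (n m k : ℕ) :
    n.choose m * (n - m).choose k = n.choose k * (n - k).choose m := by
  rcases le_or_gt (m + k) n with h | h
  · rw [← choose_symm (show m ≤ n by omega), choose_mul (show k ≤ n - m by omega),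
      show n - m - k = n - k - m by omega, choose_symm (show m ≤ n - k by omega)]
  · have vanish : ∀ a b, n < a + b → n.choose a * (n - a).choose b = 0 := fun a b hab ↦ by
      rcases le_or_gt a n with ha | ha
      · rw [choose_eq_zero_of_lt (show n - a < b by omega), mul_zero]
      · rw [choose_eq_zero_of_lt ha, zero_mul]
    rw [vanish m k h, vanish k m (by omega)]

theorem sum_range_choose_mul_of_le {R : Type*} [NonAssocSemiring R] {N M : ℕ} (h : N ≤ M)
    (f : ℕ → R) :
    ∑ k ∈ range (M + 1), (N.choose k : R) * f k = ∑ k ∈ range (N + 1), (N.choose k : R) * f k :=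
  (sum_subset (range_subset_range.2 (by omega)) fun k _ hk ↦ by
    rw [choose_eq_zero_of_lt (by simpa using hk), cast_zero, zero_mul]).symm

theorem sum_range_neg_one_pow_mul_choose_mul_pow_self {R : Type*} [CommRing R] (N : ℕ) :
    ∑ m ∈ range (N + 1), (-1 : R) ^ (N - m) * N.choose m * (m : R) ^ N = N ! := by
  have := congr_fun (fwdDiff_iter_eq_factorial (R := R) (n := N)) 0
  rw [fwdDiff_iter_eq_sum_shift] at this
  simpa [zsmul_eq_mul] using this

theorem sum_range_choose_sub_mul_neg_one_pow_mul_pow {R : Type*} [CommRing R] {n k : ℕ}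
    (hk : k ≤ n) :
    ∑ m ∈ range (n + 1), ((n - k).choose m : R) * ((-1) ^ (n - m) * (m : R) ^ (n - k)) =
      (-1) ^ k * (n - k)! := by
  rw [sum_range_choose_mul_of_le (by omega : n - k ≤ n),
    ← sum_range_neg_one_pow_mul_choose_mul_pow_self, mul_sum]
  refine sum_congr rfl fun m hm ↦ ?_
  rw [show n - m = k + (n - k - m) by have := mem_range.1 hm; omega, pow_add]
  ring

theorem calT_summand_neg_sub_one {n m : ℕ} (hm : m ≤ n) :
    (n.choose m : ℂ) * (m : ℂ) ^ m * (((n - m : ℕ) : ℂ) + (-(n : ℂ) - 1)) ^ (n - m) =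
      ∑ k ∈ range (n + 1),
        (n.choose k : ℂ) * ((n - k).choose m * ((-1) ^ (n - m) * (m : ℂ) ^ (n - k))) := by
  have base : ((n - m : ℕ) : ℂ) + (-(n : ℂ) - 1) = -(1 + m) := by
    push_cast [Nat.cast_sub hm]
    ring
  calc
    _ = (n.choose m : ℂ) * ∑ k ∈ range (n - m + 1),
          ((n - m).choose k : ℂ) * ((-1) ^ (n - m) * (m : ℂ) ^ (n - k)) := by
      rw [base, neg_pow, add_pow, mul_sum, mul_sum, mul_sum]
      refine sum_congr rfl fun k hk ↦ ?_
      rw [one_pow, show n - k = m + (n - m - k) by have := mem_range.1 hk; omega, pow_add]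
      ring
    _ = (n.choose m : ℂ) * ∑ k ∈ range (n + 1),
          ((n - m).choose k : ℂ) * ((-1) ^ (n - m) * (m : ℂ) ^ (n - k)) := by
      rw [sum_range_choose_mul_of_le (by omega : n - m ≤ n)]
    _ = _ := by
      rw [mul_sum]
      refine sum_congr rfl fun k _ ↦ ?_
      rw [← mul_assoc, ← mul_assoc, ← cast_mul, choose_mul_choose_sub_comm, cast_mul]
      ring

theorem calT_subfactorial (n : ℕ) :
    calT n (-(n : ℂ) - 1) =
      ∑ k ∈ Finset.range (n + 1), (-1 : ℂ) ^ k * ((n.factorial : ℂ) / (k.factorial : ℂ)) := by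
  calc
    calT n (-(n : ℂ) - 1) = ∑ m ∈ range (n + 1), ∑ k ∈ range (n + 1),
        (n.choose k : ℂ) * ((n - k).choose m * ((-1) ^ (n - m) * (m : ℂ) ^ (n - k))) :=
      sum_congr rfl fun m hm ↦ calT_summand_neg_sub_one (mem_range_succ_iff.1 hm)
    _ = ∑ k ∈ range (n + 1), (n.choose k : ℂ) * ((-1) ^ k * (n - k)!) := by
      rw [sum_comm]
      refine sum_congr rfl fun k hk ↦ ?_
      rw [← mul_sum, sum_range_choose_sub_mul_neg_one_pow_mul_pow (mem_range_succ_iff.1 hk)]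
    _ = _ := by
      refine sum_congr rfl fun k hk ↦ ?_
      rw [cast_choose ℂ (mem_range_succ_iff.1 hk)]
      field_simp
      exact mul_div_mul_right _ _ (cast_ne_zero.2 (factorial_ne_zero _))
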